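/- Let X and Y be real Banach spaces and S : X → Y a bounded linear operator. Then for every n ≥ 1, ∏_{k=1}^n c_k(S) ≤ n^n · ∏_{k=1}^n h_k(S), where c_k are the Gelfand numbers and h_k the Hilbert numbers. -/

import Mathlib

/-- The real Hilbert sequence space ℓ₂ = lp(ℕ, 2). -/
abbrev Ell2 : Type := lp (fun _ : ℕ => ℝ) 2

/-- Approximation numbers. -/
noncomputable def approxNumber {X Y : Type*} [NormedAddCommGroup X] [NormedSpace ℝ X]
    [NormedAddCommGroup Y] [NormedSpace ℝ Y] (n : ℕ) (S : X →L[ℝ] Y) : ℝ :=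
  sInf {r : ℝ | ∃ L : X →L[ℝ] Y, LinearMap.rank (L : X →ₗ[ℝ] Y) < n ∧ r = ‖S - L‖}

/-- Gelfand numbers. -/
noncomputable def gelfandNumber {X Y : Type*} [NormedAddCommGroup X] [NormedSpace ℝ X]
    [NormedAddCommGroup Y] [NormedSpace ℝ Y] (n : ℕ) (S : X →L[ℝ] Y) : ℝ :=
  sInf {r : ℝ | ∃ M : Submodule ℝ X, IsClosed (M : Set X) ∧ Module.rank ℝ (X ⧸ M) < n ∧
    r = ‖S.comp M.subtypeL‖}

/-- The canonical quotient map onto `Y ⧸ N`, as a continuous linear map (with respect to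
the quotient (semi)norm). -/
noncomputable def quotientCLM {Y : Type*} [NormedAddCommGroup Y] [NormedSpace ℝ Y]
    (N : Submodule ℝ Y) : Y →L[ℝ] Y ⧸ N :=
  LinearMap.mkContinuous N.mkQ 1 fun y => by
    simpa using Submodule.Quotient.norm_mk_le N y

/-- Kolmogorov numbers. -/
noncomputable def kolmogorovNumber {X Y : Type*} [NormedAddCommGroup X] [NormedSpace ℝ X]
    [NormedAddCommGroup Y] [NormedSpace ℝ Y] (n : ℕ) (S : X →L[ℝ] Y) : ℝ :=
  sInf {r : ℝ | ∃ N : Submodule ℝ Y, Module.rank ℝ N < n ∧ r = ‖(quotientCLM N).comp S‖}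

/-- Hilbert numbers. -/
noncomputable def hilbertNumber {X Y : Type*} [NormedAddCommGroup X] [NormedSpace ℝ X]
    [NormedAddCommGroup Y] [NormedSpace ℝ Y] (n : ℕ) (S : X →L[ℝ] Y) : ℝ :=
  sSup {r : ℝ | ∃ (A : Ell2 →L[ℝ] X) (B : Y →L[ℝ] Ell2), A ≠ 0 ∧ B ≠ 0 ∧
    r = approxNumber n (B.comp (S.comp A)) / (‖B‖ * ‖A‖)}

/-!
If some `c_k(S)` vanishes there is nothing to prove; otherwise fix `r < 1` and choose inductively
`x i` in the unit ball of `X` and `f i` in the unit ball of `Y*` such that `x i` lies in the joint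
kernel of the `f j ∘ S` with `j < i` and `f i (S (x i)) > r * c_{i+1}(S)`: that kernel is closed of
codimension at most `i`, so such an `x i` exists by the definition of `c_{i+1}`, and `f i` norms
`S (x i)` by Hahn–Banach. The matrix `(f i (S (x j)))` is lower triangular, hence its determinant
is at least `r ^ n * ∏ c_k(S)`. It is the matrix of `B ∘ S ∘ A` on `ℓ₂ⁿ`, where
`A v = ∑ v j • x j` and `B y = (f i y)ᵢ` both have norm at most `√n`. The absolute value of the
determinant is the product of the singular values `s_k`, and
`s_k ≤ a_k(B ∘ S ∘ A) ≤ ‖B‖ ‖A‖ h_k(S) ≤ n h_k(S)` because `ℓ₂ⁿ` embeds isometrically into `ℓ₂`.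
Let `r → 1`.
-/

open Module
open scoped RealInnerProductSpace

section ApproxNumber

variable {X Y Z W : Type*} [NormedAddCommGroup X] [NormedSpace ℝ X]
  [NormedAddCommGroup Y] [NormedSpace ℝ Y] [NormedAddCommGroup Z] [NormedSpace ℝ Z]
  [NormedAddCommGroup W] [NormedSpace ℝ W]

lemma approxNumber_zero (S : X →L[ℝ] Y) : approxNumber 0 S = 0 := by
  simp [approxNumber]

lemma approxNumber_nonneg (k : ℕ) (S : X →L[ℝ] Y) : 0 ≤ approxNumber k S :=
  Real.sInf_nonneg (by rintro _ ⟨L, -, rfl⟩; exact norm_nonneg _)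

lemma approxNumber_le_norm_sub {k : ℕ} (S L : X →L[ℝ] Y)
    (hL : LinearMap.rank (L : X →ₗ[ℝ] Y) < k) : approxNumber k S ≤ ‖S - L‖ :=
  csInf_le ⟨0, by rintro _ ⟨L, -, rfl⟩; exact norm_nonneg _⟩ ⟨L, hL, rfl⟩

lemma approxNumber_le_norm (k : ℕ) (S : X →L[ℝ] Y) : approxNumber k S ≤ ‖S‖ := by
  rcases Nat.eq_zero_or_pos k with rfl | hk
  · simp [approxNumber_zero]
  · simpa using approxNumber_le_norm_sub S 0 (by simpa using hk)

lemma approxNumber_comp_comp_le (k : ℕ) (S : X →L[ℝ] Y) {P : Y →L[ℝ] W} {J : Z →L[ℝ] X}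
    (hP : ‖P‖ ≤ 1) (hJ : ‖J‖ ≤ 1) : approxNumber k (P ∘L S ∘L J) ≤ approxNumber k S := by
  rcases Nat.eq_zero_or_pos k with rfl | hk
  · simp [approxNumber_zero]
  refine le_csInf ⟨_, 0, by simpa using hk, rfl⟩ ?_
  rintro _ ⟨L, hL, rfl⟩
  have hrank : LinearMap.rank ((P ∘L L ∘L J : Z →L[ℝ] W) : Z →ₗ[ℝ] W) < k := by
    refine Cardinal.lift_lt_nat_iff.mp ((LinearMap.lift_rank_comp_le_right _ _).trans_lt ?_)
    exact Cardinal.lift_lt_nat_iff.mpr ((LinearMap.rank_comp_le_left _ _).trans_lt hL)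
  calc approxNumber k (P ∘L S ∘L J) ≤ ‖P ∘L S ∘L J - P ∘L L ∘L J‖ :=
        approxNumber_le_norm_sub _ _ hrank
    _ = ‖P ∘L (S - L) ∘L J‖ := by simp [ContinuousLinearMap.comp_sub, ContinuousLinearMap.sub_comp]
    _ ≤ ‖P‖ * (‖S - L‖ * ‖J‖) := ContinuousLinearMap.opNorm_comp_le _ _ |>.trans
        (mul_le_mul_of_nonneg_left (ContinuousLinearMap.opNorm_comp_le _ _) (norm_nonneg _))
    _ ≤ 1 * (‖S - L‖ * 1) := by gcongr
    _ = ‖S - L‖ := by ring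

end ApproxNumber

section HilbertNumber

variable {X Y : Type*} [NormedAddCommGroup X] [NormedSpace ℝ X]
  [NormedAddCommGroup Y] [NormedSpace ℝ Y]

lemma hilbertNumber_nonneg (k : ℕ) (S : X →L[ℝ] Y) : 0 ≤ hilbertNumber k S :=
  Real.sSup_nonneg <| by
    rintro _ ⟨A, B, -, -, rfl⟩
    exact div_nonneg (approxNumber_nonneg _ _) (by positivity)

lemma approxNumber_le_hilbertNumber_mul (k : ℕ) (S : X →L[ℝ] Y) (A : Ell2 →L[ℝ] X)
    (B : Y →L[ℝ] Ell2) : approxNumber k (B ∘L S ∘L A) ≤ hilbertNumber k S * (‖B‖ * ‖A‖) := by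
  rcases eq_or_ne A 0 with rfl | hA
  · simpa using approxNumber_le_norm k (B ∘L S ∘L (0 : Ell2 →L[ℝ] X))
  rcases eq_or_ne B 0 with rfl | hB
  · simpa using approxNumber_le_norm k ((0 : Y →L[ℝ] Ell2) ∘L S ∘L A)
  have hBA : 0 < ‖B‖ * ‖A‖ := by positivity
  rw [← div_le_iff₀ hBA]
  refine le_csSup ⟨‖S‖, ?_⟩ ⟨A, B, hA, hB, rfl⟩
  rintro _ ⟨A', B', hA', hB', rfl⟩
  rw [div_le_iff₀ (by positivity)]
  calc approxNumber k (B' ∘L S ∘L A') ≤ ‖B' ∘L S ∘L A'‖ := approxNumber_le_norm k _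
    _ ≤ ‖B'‖ * (‖S‖ * ‖A'‖) := (B'.opNorm_comp_le _).trans
        (mul_le_mul_of_nonneg_left (S.opNorm_comp_le A') (norm_nonneg _))
    _ = ‖S‖ * (‖B'‖ * ‖A'‖) := by ring

lemma approxNumber_le_hilbertNumber_mul_of_isometry {E : Type*} [NormedAddCommGroup E]
    [InnerProductSpace ℝ E] [CompleteSpace E] (J : E →ₗᵢ[ℝ] Ell2) (k : ℕ) (S : X →L[ℝ] Y)
    (A : E →L[ℝ] X) (B : Y →L[ℝ] E) :
    approxNumber k (B ∘L S ∘L A) ≤ hilbertNumber k S * (‖B‖ * ‖A‖) := by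
  set Jc : E →L[ℝ] Ell2 := J.toContinuousLinearMap
  have hadjJ : ∀ v, Jc.adjoint (Jc v) = v := fun v => congr($(J.adjoint_comp_self) v)
  have hJ : ‖Jc‖ ≤ 1 := J.norm_toContinuousLinearMap_le
  have hP : ‖Jc.adjoint‖ ≤ 1 := by rwa [ContinuousLinearMap.adjoint.norm_map]
  have hfactor : B ∘L S ∘L A = Jc.adjoint ∘L ((Jc ∘L B) ∘L S ∘L (A ∘L Jc.adjoint)) ∘L Jc := by
    ext v; simp [hadjJ]
  calc approxNumber k (B ∘L S ∘L A)
      ≤ approxNumber k ((Jc ∘L B) ∘L S ∘L (A ∘L Jc.adjoint)) := by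
        rw [hfactor]; exact approxNumber_comp_comp_le k _ hP hJ
    _ ≤ hilbertNumber k S * (‖Jc ∘L B‖ * ‖A ∘L Jc.adjoint‖) :=
        approxNumber_le_hilbertNumber_mul k S _ _
    _ ≤ hilbertNumber k S * (‖B‖ * ‖A‖) := by
        have hB : ‖Jc ∘L B‖ ≤ ‖B‖ :=
          (Jc.opNorm_comp_le B).trans (mul_le_of_le_one_left (norm_nonneg B) hJ)
        have hA : ‖A ∘L Jc.adjoint‖ ≤ ‖A‖ :=
          (A.opNorm_comp_le _).trans (mul_le_of_le_one_right (norm_nonneg A) hP)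
        gcongr
        exact hilbertNumber_nonneg k S

end HilbertNumber

lemma orthonormal_ell2_single_fin (m : ℕ) :
    Orthonormal ℝ fun j : Fin m => (lp.single 2 (j : ℕ) (1 : ℝ) : Ell2) := by
  classical
  rw [orthonormal_iff_ite]
  intro i j
  simp [lp.inner_single_left, lp.single_apply, Pi.single_apply, Fin.val_inj]

lemma nonempty_euclideanSpace_linearIsometry_ell2 (m : ℕ) :
    Nonempty (EuclideanSpace ℝ (Fin m) →ₗᵢ[ℝ] Ell2) := by
  let b := EuclideanSpace.basisFun (Fin m) ℝ
  have hb : Orthonormal ℝ b.toBasis := by rw [b.coe_toBasis]; exact b.orthonormal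
  refine ⟨(b.toBasis.constr ℝ fun j => lp.single 2 (j : ℕ) (1 : ℝ)).isometryOfOrthonormal hb ?_⟩
  convert orthonormal_ell2_single_fin m with j
  simp

lemma exists_mem_ne_zero_apply_eq_zero {K E F : Type*} [Field K] [AddCommGroup E] [Module K E]
    [FiniteDimensional K E] [AddCommGroup F] [Module K F] (L : E →ₗ[K] F) {W : Submodule K E}
    (hW : LinearMap.rank L < finrank K W) : ∃ v ∈ W, v ≠ 0 ∧ L v = 0 := by
  have hlt : finrank K (LinearMap.range L) < finrank K W := by
    rw [LinearMap.rank, ← finrank_eq_rank] at hW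
    exact_mod_cast hW
  obtain ⟨⟨v, hvW⟩, hv, hv0⟩ := Submodule.exists_mem_ne_zero_of_ne_bot
    (LinearMap.ker_ne_bot_of_finrank_lt (f := L.rangeRestrict.domRestrict W) hlt)
  refine ⟨v, hvW, fun h => hv0 (by simp [h]), ?_⟩
  simpa using congr_arg Subtype.val (LinearMap.mem_ker.mp hv)

section SingularValues

variable {E : Type*} [NormedAddCommGroup E] [InnerProductSpace ℝ E] [FiniteDimensional ℝ E]

lemma LinearMap.IsSymmetric.eigenvalues_mul_norm_sq_le_inner {T : E →ₗ[ℝ] E} (hT : T.IsSymmetric)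
    {n : ℕ} (hn : finrank ℝ E = n) (i : Fin n) {v : E}
    (hv : v ∈ Submodule.span ℝ (hT.eigenvectorBasis hn '' Set.Iic i)) :
    hT.eigenvalues hn i * ‖v‖ ^ 2 ≤ ⟪T v, v⟫ := by
  set b := hT.eigenvectorBasis hn
  have hcoord : ∀ j, i < j → b.repr v j = 0 := by
    intro j hij
    have hspan : Submodule.span ℝ (b '' Set.Iic i) ≤ LinearMap.ker (innerₛₗ ℝ (b j)) := by
      refine Submodule.span_le.mpr ?_
      rintro _ ⟨k, hk, rfl⟩
      simpa using b.orthonormal.2 (ne_of_gt (lt_of_le_of_lt hk hij))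
    simpa [b.repr_apply_apply] using hspan hv
  have hnorm : ‖v‖ ^ 2 = ∑ j, b.repr v j ^ 2 := by
    rw [← b.repr.norm_map, EuclideanSpace.norm_sq_eq]
    simp
  have hinner : ⟪T v, v⟫ = ∑ j, hT.eigenvalues hn j * b.repr v j ^ 2 := by
    rw [← b.repr.inner_map_map, PiLp.inner_apply]
    refine Finset.sum_congr rfl fun j _ => ?_
    rw [hT.eigenvectorBasis_apply_self_apply, Real.inner_apply, RCLike.ofReal_real_eq_id, id_eq]
    ring
  rw [hnorm, hinner, Finset.mul_sum]
  refine Finset.sum_le_sum fun j _ => ?_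
  rcases le_or_gt j i with hji | hij
  · exact mul_le_mul_of_nonneg_right (hT.eigenvalues_antitone hn hji) (sq_nonneg _)
  · simp [hcoord j hij]

lemma singularValues_le_approxNumber {F : Type*} [NormedAddCommGroup F] [InnerProductSpace ℝ F]
    [FiniteDimensional ℝ F] (T : E →L[ℝ] F) (i : ℕ) :
    (T : E →ₗ[ℝ] F).singularValues i ≤ approxNumber (i + 1) T := by
  rcases le_or_gt (finrank ℝ E) i with hi | hi
  · rw [LinearMap.singularValues_of_finrank_le _ hi]
    exact approxNumber_nonneg _ _
  refine le_csInf ⟨_, 0, by simp, rfl⟩ ?_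
  rintro _ ⟨L, hL, rfl⟩
  -- `L` vanishes at some `v ≠ 0` spanned by the top `i + 1` eigenvectors of `T† T`.
  set hG := (T : E →ₗ[ℝ] F).isSymmetric_adjoint_comp_self
  set b := hG.eigenvectorBasis rfl
  have hW : finrank ℝ (Submodule.span ℝ (b '' Set.Iic ⟨i, hi⟩)) = i + 1 := by
    have hli : LinearIndependent ℝ fun j : Set.Iic (⟨i, hi⟩ : Fin _) => b j :=
      b.orthonormal.linearIndependent.comp _ Subtype.val_injective
    rw [Set.image_eq_range, finrank_span_eq_card hli]
    simp
  obtain ⟨v, hvW, hv0, hLv⟩ := exists_mem_ne_zero_apply_eq_zero (L : E →ₗ[ℝ] F)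
    (by rw [hW]; exact_mod_cast hL)
  have hTLv : (T - L) v = T v := by simp [show L v = 0 from hLv]
  have hsq : ((T : E →ₗ[ℝ] F).singularValues i * ‖v‖) ^ 2 ≤ ‖(T - L) v‖ ^ 2 := by
    rw [mul_pow, LinearMap.sq_singularValues_of_lt _ rfl hi, hTLv]
    calc _ ≤ ⟪(LinearMap.adjoint (T : E →ₗ[ℝ] F) ∘ₗ T) v, v⟫ :=
          hG.eigenvalues_mul_norm_sq_le_inner rfl _ hvW
      _ = ‖T v‖ ^ 2 := by
          rw [LinearMap.comp_apply, LinearMap.adjoint_inner_left, real_inner_self_eq_norm_sq]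
          rfl
  have hle := (le_of_pow_le_pow_left₀ two_ne_zero (norm_nonneg _) hsq).trans ((T - L).le_opNorm v)
  exact le_of_mul_le_mul_right hle (norm_pos_iff.mpr hv0)

lemma abs_det_le_prod_approxNumber (T : E →L[ℝ] E) :
    |LinearMap.det (T : E →ₗ[ℝ] E)| ≤ ∏ i ∈ Finset.range (finrank ℝ E), approxNumber (i + 1) T := by
  rw [← LinearMap.normDet_eq_abs_det, LinearMap.normDet_eq_prod_singularValues]
  exact Finset.prod_le_prod (fun i _ => LinearMap.singularValues_nonneg _ i)
    fun i _ => singularValues_le_approxNumber T i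

end SingularValues

section FrameOperators

variable {ι X Y : Type*} [Fintype ι] [NormedAddCommGroup X] [NormedSpace ℝ X]
  [NormedAddCommGroup Y] [NormedSpace ℝ Y]

noncomputable def synthesisCLM (x : ι → X) : EuclideanSpace ℝ ι →L[ℝ] X :=
  ∑ j, (EuclideanSpace.proj j).smulRight (x j)

noncomputable def analysisCLM (f : ι → StrongDual ℝ Y) : Y →L[ℝ] EuclideanSpace ℝ ι :=
  (EuclideanSpace.equiv ι ℝ).symm ∘L ContinuousLinearMap.pi f

@[simp]
lemma synthesisCLM_apply (x : ι → X) (v : EuclideanSpace ℝ ι) :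
    synthesisCLM x v = ∑ j, v j • x j := by
  simp [synthesisCLM]

lemma norm_synthesisCLM_le {x : ι → X} (hx : ∀ j, ‖x j‖ ≤ 1) :
    ‖synthesisCLM x‖ ≤ √(Fintype.card ι) := by
  refine ContinuousLinearMap.opNorm_le_bound _ (by positivity) fun v => ?_
  have hl1 : (∑ j, |v j|) ^ 2 ≤ (√(Fintype.card ι) * ‖v‖) ^ 2 := by
    rw [mul_pow, Real.sq_sqrt (by positivity), EuclideanSpace.norm_sq_eq]
    simpa using sq_sum_le_card_mul_sum_sq (s := Finset.univ) (f := fun j => |v j|)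
  calc ‖synthesisCLM x v‖ ≤ ∑ j, ‖v j • x j‖ := by
        rw [synthesisCLM_apply]; exact norm_sum_le _ _
    _ ≤ ∑ j, |v j| := Finset.sum_le_sum fun j _ => by
        rw [norm_smul, Real.norm_eq_abs]; exact mul_le_of_le_one_right (abs_nonneg _) (hx j)
    _ ≤ √(Fintype.card ι) * ‖v‖ := le_of_pow_le_pow_left₀ two_ne_zero (by positivity) hl1

lemma norm_analysisCLM_le {f : ι → StrongDual ℝ Y} (hf : ∀ i, ‖f i‖ ≤ 1) :
    ‖analysisCLM f‖ ≤ √(Fintype.card ι) := by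
  refine ContinuousLinearMap.opNorm_le_bound _ (by positivity) fun y => ?_
  refine le_of_pow_le_pow_left₀ two_ne_zero (by positivity) ?_
  rw [mul_pow, Real.sq_sqrt (by positivity), EuclideanSpace.norm_sq_eq]
  calc ∑ i, ‖analysisCLM f y i‖ ^ 2 ≤ ∑ _i : ι, ‖y‖ ^ 2 := Finset.sum_le_sum fun i _ => by
        gcongr
        exact (f i).le_of_opNorm_le (hf i) y |>.trans_eq (one_mul _)
    _ = Fintype.card ι * ‖y‖ ^ 2 := by simp

lemma det_analysisCLM_comp_synthesisCLM [DecidableEq ι] (f : ι → StrongDual ℝ Y) (x : ι → Y) :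
    LinearMap.det (analysisCLM f ∘L synthesisCLM x : EuclideanSpace ℝ ι →ₗ[ℝ] _) =
      (Matrix.of fun i j => f i (x j)).det := by
  set b := (EuclideanSpace.basisFun ι ℝ).toBasis
  rw [← LinearMap.det_toMatrix b]
  congr 1
  ext i j
  simp [b, analysisCLM, LinearMap.toMatrix_apply]

end FrameOperators

section GelfandNumber

variable {X Y : Type*} [NormedAddCommGroup X] [NormedSpace ℝ X]
  [NormedAddCommGroup Y] [NormedSpace ℝ Y]

lemma gelfandNumber_nonneg (k : ℕ) (S : X →L[ℝ] Y) : 0 ≤ gelfandNumber k S :=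
  Real.sInf_nonneg <| by rintro _ ⟨M, -, -, rfl⟩; exact norm_nonneg (S ∘L M.subtypeL)

lemma gelfandNumber_le_norm_comp_subtypeL {k : ℕ} (S : X →L[ℝ] Y) {M : Submodule ℝ X}
    (hM : IsClosed (M : Set X)) (hcodim : Module.rank ℝ (X ⧸ M) < k) :
    gelfandNumber k S ≤ ‖S ∘L M.subtypeL‖ :=
  csInf_le ⟨0, by rintro _ ⟨N, -, -, rfl⟩; exact norm_nonneg (S ∘L N.subtypeL)⟩ ⟨M, hM, hcodim, rfl⟩

lemma rank_quotient_iInf_ker_le {k : ℕ} (φ : Fin k → StrongDual ℝ X) :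
    Module.rank ℝ (X ⧸ ⨅ i, (φ i).ker) ≤ k := by
  let π : X →ₗ[ℝ] Fin k → ℝ := LinearMap.pi fun i => (φ i : X →ₗ[ℝ] ℝ)
  have hker : LinearMap.ker π = ⨅ i, (φ i).ker := LinearMap.ker_pi _
  have hrange : Module.rank ℝ (LinearMap.range π) ≤ k :=
    (Submodule.rank_le _).trans (rank_fin_fun k).le
  rw [← hker, ← Cardinal.lift_le_nat_iff.{_, 0}, π.quotKerEquivRange.lift_rank_eq]
  exact Cardinal.lift_le_nat_iff.mpr hrange

lemma exists_norm_le_one_lt_norm_apply_of_lt_gelfandNumber (S : X →L[ℝ] Y) {k : ℕ}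
    (φ : Fin k → StrongDual ℝ X) {t : ℝ} (ht : t < gelfandNumber (k + 1) S) :
    ∃ x : X, ‖x‖ ≤ 1 ∧ (∀ i, φ i x = 0) ∧ t < ‖S x‖ := by
  set M := ⨅ i, (φ i).ker
  have hM : IsClosed (M : Set X) := by
    simpa [M, Submodule.coe_iInf] using isClosed_iInter fun i => (φ i).isClosed_ker
  have hcodim : Module.rank ℝ (X ⧸ M) < (k + 1 : ℕ) :=
    (rank_quotient_iInf_ker_le φ).trans_lt (by exact_mod_cast k.lt_succ_self)
  obtain ⟨u, hu, htu⟩ := (S ∘L M.subtypeL).exists_lt_apply_of_lt_opNorm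
    (ht.trans_le (gelfandNumber_le_norm_comp_subtypeL S hM hcodim))
  exact ⟨u, hu.le, fun i => (Submodule.mem_iInf _).mp u.2 i, htu⟩

lemma exists_triangular_system_of_lt_gelfandNumber (S : X →L[ℝ] Y) {n : ℕ} (t : Fin n → ℝ)
    (ht : ∀ i, t i < gelfandNumber (i + 1) S) :
    ∃ (x : Fin n → X) (f : Fin n → StrongDual ℝ Y), (∀ i, ‖x i‖ ≤ 1) ∧ (∀ i, ‖f i‖ ≤ 1) ∧
      (∀ i j, i < j → f i (S (x j)) = 0) ∧ ∀ i, t i < f i (S (x i)) := by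
  induction n with
  | zero => exact ⟨finZeroElim, finZeroElim, finZeroElim, finZeroElim, finZeroElim, finZeroElim⟩
  | succ n ih =>
    obtain ⟨x, f, hx, hf, htri, hdiag⟩ := ih (Fin.init t) fun i => ht i.castSucc
    obtain ⟨xₙ, hxₙ, hker, htxₙ⟩ := exists_norm_le_one_lt_norm_apply_of_lt_gelfandNumber S
      (fun i => f i ∘L S) (ht (Fin.last n))
    obtain ⟨fₙ, hfₙ, hfxₙ⟩ := exists_dual_vector'' ℝ (S xₙ)
    refine ⟨Fin.snoc x xₙ, Fin.snoc f fₙ,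
      Fin.forall_fin_succ'.mpr ⟨fun i => by simpa using hx i, by simpa using hxₙ⟩,
      Fin.forall_fin_succ'.mpr ⟨fun i => by simpa using hf i, by simpa using hfₙ⟩, ?_,
      Fin.forall_fin_succ'.mpr
        ⟨fun i => by simpa [Fin.init] using hdiag i, by simpa [hfxₙ] using htxₙ⟩⟩
    intro i j hij
    induction j using Fin.lastCases with
    | last =>
      obtain ⟨i, rfl⟩ := Fin.exists_castSucc_eq.mpr (Fin.ne_last_of_lt hij)
      simpa using hker i
    | cast j =>
      obtain ⟨i, rfl⟩ := Fin.exists_castSucc_eq.mpr (hij.trans (Fin.castSucc_lt_last j)).ne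
      simpa using htri i j (Fin.castSucc_lt_castSucc_iff.mp hij)

end GelfandNumber

lemma prod_diag_le_pow_mul_prod_hilbertNumber {X Y : Type*} [NormedAddCommGroup X]
    [NormedSpace ℝ X] [NormedAddCommGroup Y] [NormedSpace ℝ Y] (S : X →L[ℝ] Y) {n : ℕ}
    {x : Fin n → X} {f : Fin n → StrongDual ℝ Y} (hx : ∀ i, ‖x i‖ ≤ 1) (hf : ∀ i, ‖f i‖ ≤ 1)
    (htri : ∀ i j, i < j → f i (S (x j)) = 0) :
    ∏ i, f i (S (x i)) ≤ (n : ℝ) ^ n * ∏ i : Fin n, hilbertNumber (i + 1) S := by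
  obtain ⟨J⟩ := nonempty_euclideanSpace_linearIsometry_ell2 n
  set T := analysisCLM f ∘L S ∘L synthesisCLM x
  have hdet : LinearMap.det (T : EuclideanSpace ℝ (Fin n) →ₗ[ℝ] _) = ∏ i, f i (S (x i)) := by
    have hT : T = analysisCLM f ∘L synthesisCLM (S ∘ x) := by ext; simp [T]
    rw [hT, det_analysisCLM_comp_synthesisCLM]
    exact Matrix.det_of_isLowerTriangular _ htri
  have hnorm : ‖analysisCLM f‖ * ‖synthesisCLM x‖ ≤ n := by
    calc _ ≤ √n * √n := by
          simpa using mul_le_mul (norm_analysisCLM_le hf) (norm_synthesisCLM_le hx)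
            (norm_nonneg _) (by positivity)
      _ = n := Real.mul_self_sqrt n.cast_nonneg
  calc ∏ i, f i (S (x i)) ≤ |LinearMap.det (T : EuclideanSpace ℝ (Fin n) →ₗ[ℝ] _)| :=
        hdet ▸ le_abs_self _
    _ ≤ ∏ i ∈ Finset.range n, approxNumber (i + 1) T := by
        simpa using abs_det_le_prod_approxNumber T
    _ ≤ ∏ i ∈ Finset.range n, ((n : ℝ) * hilbertNumber (i + 1) S) := by
        refine Finset.prod_le_prod (fun _ _ => approxNumber_nonneg _ _) fun i _ => ?_
        refine (approxNumber_le_hilbertNumber_mul_of_isometry J _ S _ _).trans ?_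
        rw [mul_comm]
        exact mul_le_mul_of_nonneg_right hnorm (hilbertNumber_nonneg _ S)
    _ = (n : ℝ) ^ n * ∏ i : Fin n, hilbertNumber (i + 1) S := by
        rw [Finset.prod_mul_distrib, Finset.prod_const, Finset.card_range,
          Fin.prod_univ_eq_prod_range (fun i => hilbertNumber (i + 1) S)]

lemma Finset.prod_Icc_one_eq_prod_fin {M : Type*} [CommMonoid M] (F : ℕ → M) (n : ℕ) :
    ∏ k ∈ Finset.Icc 1 n, F k = ∏ i : Fin n, F (i + 1) := by
  rw [Fin.prod_univ_eq_prod_range (fun i => F (i + 1)), Finset.range_eq_Ico,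
    Finset.prod_Ico_add' F]
  rfl

open Filter Topology in
lemma le_of_forall_pow_mul_le {a b : ℝ} (n : ℕ) (h : ∀ r ∈ Set.Ioo (0 : ℝ) 1, r ^ n * a ≤ b) :
    a ≤ b := by
  have hlim : Tendsto (fun r : ℝ => r ^ n * a) (𝓝[<] 1) (𝓝 (1 ^ n * a)) :=
    ((by fun_prop : Continuous fun r : ℝ => r ^ n * a).tendsto 1).mono_left nhdsWithin_le_nhds
  rw [one_pow, one_mul] at hlim
  exact le_of_tendsto hlim (mem_of_superset (Ioo_mem_nhdsLT zero_lt_one) h)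

theorem prod_gelfand_le_prod_hilbert_general
    {X Y : Type*} [NormedAddCommGroup X] [NormedSpace ℝ X]
    [NormedAddCommGroup Y] [NormedSpace ℝ Y]
    (S : X →L[ℝ] Y) (n : ℕ) :
    ∏ k ∈ Finset.Icc 1 n, gelfandNumber k S ≤
      (n : ℝ) ^ n * ∏ k ∈ Finset.Icc 1 n, hilbertNumber k S := by
  by_cases hc : ∃ k ∈ Finset.Icc 1 n, gelfandNumber k S = 0
  · obtain ⟨k, hk, hk0⟩ := hc
    rw [Finset.prod_eq_zero hk hk0]
    exact mul_nonneg (by positivity) (Finset.prod_nonneg fun k _ => hilbertNumber_nonneg k S)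
  have hpos : ∀ i : Fin n, 0 < gelfandNumber (i + 1) S := fun i =>
    (gelfandNumber_nonneg _ S).lt_of_ne' fun h => hc ⟨i + 1, by simp, h⟩
  rw [Finset.prod_Icc_one_eq_prod_fin, Finset.prod_Icc_one_eq_prod_fin]
  refine le_of_forall_pow_mul_le n fun r hr => ?_
  obtain ⟨x, f, hx, hf, htri, hdiag⟩ := exists_triangular_system_of_lt_gelfandNumber S
    (fun i => r * gelfandNumber (i + 1) S) fun i => mul_lt_of_lt_one_left (hpos i) hr.2
  calc r ^ n * ∏ i : Fin n, gelfandNumber (i + 1) S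
      = ∏ i : Fin n, r * gelfandNumber (i + 1) S := by
        rw [Finset.prod_mul_distrib, Finset.prod_const, Finset.card_univ, Fintype.card_fin]
    _ ≤ ∏ i, f i (S (x i)) :=
        Finset.prod_le_prod (fun i _ => (mul_pos hr.1 (hpos i)).le) fun i _ => (hdiag i).le
    _ ≤ (n : ℝ) ^ n * ∏ i : Fin n, hilbertNumber (i + 1) S :=
        prod_diag_le_pow_mul_prod_hilbertNumber S hx hf htri

theorem prod_gelfand_le_prod_hilbert
    {X Y : Type*} [NormedAddCommGroup X] [NormedSpace ℝ X] [CompleteSpace X]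
    [NormedAddCommGroup Y] [NormedSpace ℝ Y] [CompleteSpace Y]
    (S : X →L[ℝ] Y) (n : ℕ) (hn : 1 ≤ n) :
    ∏ k ∈ Finset.Icc 1 n, gelfandNumber k S ≤
      (n : ℝ) ^ n * ∏ k ∈ Finset.Icc 1 n, hilbertNumber k S :=
  prod_gelfand_le_prod_hilbert_general S n
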